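/- arXiv:2311.01005 — 4 statements merged into one kernel-verified Lean document; each statement's English description precedes it below -/
import Mathlib

section
/- There exists a subset A ⊆ ℕ with d⁻(A) = 1/2 and a family { B_α : α ∈ I } of subsets of A of cardinality 2^{ℵ₀} such that d⁻(B_α) = 1/2 for every α and d⁻(B_α ∩ B_β) = 0 for all distinct α, β. -/
open Filter

/-- Lower asymptotic density of a set of naturals. -/
noncomputable def dLow (A : Set ℕ) : ℝ :=
  liminf (fun n : ℕ => (Nat.card (A ∩ Set.Iio n : Set ℕ) : ℝ) / n) atTop

/-- Upper asymptotic density of a set of naturals. -/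
noncomputable def dUp (A : Set ℕ) : ℝ :=
  limsup (fun n : ℕ => (Nat.card (A ∩ Set.Iio n : Set ℕ) : ℝ) / n) atTop

/-- interval endpoints -/
def ee (j : ℕ) : ℕ := 2 ^ 2 ^ j

/-- region index -/
def LL (n : ℕ) : ℕ := Nat.log 2 (Nat.log 2 n)

/-- parity choice in region j -/
def cc (α : ℕ → Bool) (j : ℕ) : ℕ := if Even j ∧ α (j / 2) = true then 1 else 0

def Bset (α : ℕ → Bool) : Set ℕ := {n | n % 2 = cc α (LL n)}

def Aset : Set ℕ := {n | n % 2 = 0 ∨ Even (LL n)}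

noncomputable def cnt (S : Set ℕ) (n : ℕ) : ℕ := (S ∩ Set.Iio n).ncard

lemma natcard_eq (S : Set ℕ) (n : ℕ) :
    (Nat.card (S ∩ Set.Iio n : Set ℕ)) = cnt S n := Nat.card_coe_set_eq _

lemma cnt_finite (S : Set ℕ) (n : ℕ) : (S ∩ Set.Iio n).Finite :=
  (Set.finite_Iio n).inter_of_right _

lemma cnt_mono (S : Set ℕ) {m n : ℕ} (h : m ≤ n) : cnt S m ≤ cnt S n :=
  Set.ncard_le_ncard (Set.inter_subset_inter_right _ (Set.Iio_subset_Iio h)) (cnt_finite S n)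

lemma ncard_Iio (n : ℕ) : (Set.Iio n).ncard = n := by
  rw [← Finset.coe_Iio, Set.ncard_coe_finset, Nat.card_Iio]

lemma cnt_le (S : Set ℕ) (n : ℕ) : cnt S n ≤ n := by
  have := Set.ncard_le_ncard (Set.inter_subset_right (s := S) (t := Set.Iio n)) (Set.finite_Iio n)
  rwa [ncard_Iio] at this

lemma cnt_le_cnt {S T : Set ℕ} (h : S ⊆ T) (n : ℕ) : cnt S n ≤ cnt T n :=
  Set.ncard_le_ncard (Set.inter_subset_inter_left _ h) (cnt_finite T n)

lemma cc_le_one (α : ℕ → Bool) (j : ℕ) : cc α j ≤ 1 := by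
  unfold cc; split <;> norm_num

lemma log2_pair (m : ℕ) : Nat.log 2 (2 * m + 1) = Nat.log 2 (2 * m) := by
  rcases Nat.eq_zero_or_pos m with h | h
  · subst h; simp
  · apply Nat.log_eq_of_pow_le_of_lt_pow
    · calc 2 ^ Nat.log 2 (2 * m) ≤ 2 * m := Nat.pow_log_le_self 2 (by omega)
        _ ≤ 2 * m + 1 := by omega
    · have h1 : 2 * m < 2 ^ (Nat.log 2 (2 * m) + 1) :=
        Nat.lt_pow_succ_log_self (by norm_num) _
      have h2 : 1 ≤ Nat.log 2 (2 * m) := by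
        have : (2:ℕ) ^ 1 ≤ 2 * m := by omega
        exact (Nat.le_log_iff_pow_le (by norm_num) (by omega)).mpr this
      rw [pow_succ] at h1 ⊢
      have h3 : 2 ≤ 2 ^ Nat.log 2 (2 * m) := by
        calc (2:ℕ) = 2 ^ 1 := rfl
          _ ≤ 2 ^ Nat.log 2 (2 * m) := Nat.pow_le_pow_right (by norm_num) h2
      omega

lemma LL_pair (m : ℕ) : LL (2 * m + 1) = LL (2 * m) := by
  unfold LL; rw [log2_pair]

instance BsetDec (α : ℕ → Bool) : DecidablePred (· ∈ Bset α) := fun n =>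
  inferInstanceAs (Decidable (n % 2 = cc α (LL n)))

lemma cnt_eq_card (S : Set ℕ) [DecidablePred (· ∈ S)] (n : ℕ) :
    cnt S n = ((Finset.range n).filter (· ∈ S)).card := by
  rw [cnt, ← Set.ncard_coe_finset]
  congr 1
  ext x
  simp only [Set.mem_inter_iff, Set.mem_Iio, Finset.coe_filter, Finset.mem_range,
    Set.mem_setOf_eq]
  tauto

lemma cnt_B_two_mul (α : ℕ → Bool) (M : ℕ) : cnt (Bset α) (2 * M) = M := by
  induction M with
  | zero =>
    have h0 : Bset α ∩ Set.Iio 0 = ∅ := by ext x; simp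
    rw [cnt, h0, Set.ncard_empty]
  | succ M ih =>
    rw [cnt_eq_card] at ih ⊢
    have h2 : 2 * (M + 1) = (2 * M + 1) + 1 := by ring
    rw [h2, Finset.range_add_one, Finset.range_add_one, Finset.filter_insert, Finset.filter_insert]
    have hmem : ((2 * M + 1) ∈ Bset α) ↔ ¬ ((2 * M) ∈ Bset α) := by
      simp only [Bset, Set.mem_setOf_eq, LL_pair]
      have := cc_le_one α (LL (2 * M))
      omega
    have hnm1 : (2 * M) ∉ Finset.filter (· ∈ Bset α) (Finset.range (2 * M)) := by
      simp
    by_cases h : (2 * M) ∈ Bset α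
    · rw [if_pos h, if_neg (by simpa [hmem] using h)]
      rw [Finset.card_insert_of_notMem hnm1, ih]
    · rw [if_neg h, if_pos (hmem.mpr h)]
      rw [Finset.card_insert_of_notMem (by simp), ih]

lemma cnt_B_lower (α : ℕ → Bool) (n : ℕ) : n / 2 ≤ cnt (Bset α) n := by
  calc n / 2 = cnt (Bset α) (2 * (n / 2)) := (cnt_B_two_mul α _).symm
    _ ≤ cnt (Bset α) n := cnt_mono _ (by omega)

lemma cnt_B_upper (α : ℕ → Bool) (n : ℕ) : cnt (Bset α) n ≤ n / 2 + 1 := by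
  calc cnt (Bset α) n ≤ cnt (Bset α) (2 * (n / 2 + 1)) := cnt_mono _ (by omega)
    _ = n / 2 + 1 := cnt_B_two_mul α _
lemma ee_succ (j : ℕ) : ee (j + 1) = ee j ^ 2 := by
  unfold ee
  rw [← pow_mul, pow_succ]

lemma two_le_ee (j : ℕ) : 2 ≤ ee j := by
  unfold ee
  calc (2:ℕ) = 2 ^ 1 := rfl
    _ ≤ 2 ^ 2 ^ j := Nat.pow_le_pow_right (by norm_num) (Nat.one_le_two_pow)

lemma lt_ee (j : ℕ) : j < ee j := by
  unfold ee
  calc j < 2 ^ j := Nat.lt_two_pow_self (n := j)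
    _ ≤ 2 ^ 2 ^ j := Nat.pow_le_pow_right (by norm_num) (Nat.le_of_lt (Nat.lt_two_pow_self (n := j)))

lemma ee_even (j : ℕ) : ee j % 2 = 0 := by
  unfold ee
  have h : (2:ℕ) ∣ 2 ^ 2 ^ j := dvd_pow_self 2 (Nat.two_pow_pos j).ne'
  obtain ⟨c, hc⟩ := h
  omega

lemma LL_of_mem {j m : ℕ} (h1 : ee j ≤ m) (h2 : m < ee (j + 1)) : LL m = j := by
  have hm : m ≠ 0 := by
    have := two_le_ee j; omega
  have l1 : 2 ^ j ≤ Nat.log 2 m :=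
    (Nat.le_log_iff_pow_le (by norm_num) hm).mpr h1
  have l2 : Nat.log 2 m < 2 ^ (j + 1) := Nat.log_lt_of_lt_pow hm h2
  exact Nat.log_eq_of_pow_le_of_lt_pow l1 l2
lemma B_subset_A (α : ℕ → Bool) : Bset α ⊆ Aset := by
  intro n hn
  simp only [Bset, Set.mem_setOf_eq] at hn
  simp only [Aset, Set.mem_setOf_eq]
  by_cases h : n % 2 = 0
  · exact Or.inl h
  · right
    unfold cc at hn
    split at hn
    · next hc => exact hc.1
    · omega

lemma cc_false (j : ℕ) : cc (fun _ => false) j = 0 := by simp [cc]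

lemma Bfalse_eq : Bset (fun _ => false) = {n : ℕ | n % 2 = 0} := by
  ext n; simp [Bset, cc_false]

/-- count bound for A at the end of an odd (gap) region -/
lemma cnt_A_bound (k : ℕ) :
    cnt Aset (ee (2 * k + 2)) ≤ (ee (2 * k + 2)) / 2 + 1 + ee (2 * k + 1) := by
  have hsub : Aset ∩ Set.Iio (ee (2 * k + 2)) ⊆
      (Bset (fun _ => false) ∩ Set.Iio (ee (2 * k + 2))) ∪ Set.Iio (ee (2 * k + 1)) := by
    rintro m ⟨hmA, hmn⟩
    simp only [Aset, Set.mem_setOf_eq] at hmA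
    by_cases h2 : m % 2 = 0
    · left
      refine ⟨?_, hmn⟩
      rw [Bfalse_eq]; exact h2
    · right
      rcases hmA with h | hev
      · omega
      · by_contra hge
        simp only [Set.mem_Iio] at hge
        simp only [Set.mem_Iio, not_lt] at hge
        have : LL m = 2 * k + 1 := LL_of_mem hge (by simpa [show 2*k+1+1 = 2*k+2 from rfl] using hmn)
        rw [this, Nat.even_iff] at hev
        omega
  have h1 : cnt Aset (ee (2 * k + 2)) ≤
      cnt (Bset (fun _ => false)) (ee (2 * k + 2)) + ee (2 * k + 1) := by
    calc cnt Aset (ee (2 * k + 2))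
        ≤ ((Bset (fun _ => false) ∩ Set.Iio (ee (2 * k + 2))) ∪ Set.Iio (ee (2 * k + 1))).ncard :=
          Set.ncard_le_ncard hsub (Set.Finite.union (cnt_finite _ _) (Set.finite_Iio _))
      _ ≤ cnt (Bset (fun _ => false)) (ee (2 * k + 2)) + (Set.Iio (ee (2 * k + 1))).ncard :=
          Set.ncard_union_le _ _
      _ = cnt (Bset (fun _ => false)) (ee (2 * k + 2)) + ee (2 * k + 1) := by rw [ncard_Iio]
  have h2 := cnt_B_upper (fun _ => false) (ee (2 * k + 2))
  omega

lemma cc_ne {α β : ℕ → Bool} {k : ℕ} (h : α k ≠ β k) : cc α (2 * k) ≠ cc β (2 * k) := by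
  have hk : (2 * k) / 2 = k := by omega
  unfold cc
  rw [hk]
  have he : Even (2 * k) := even_two_mul k
  rcases Bool.eq_false_or_eq_true (α k) with ha | ha <;>
    rcases Bool.eq_false_or_eq_true (β k) with hb | hb <;>
      simp [ha, hb, he] at h ⊢

/-- intersection bound at the end of an even (split) region where bits differ -/
lemma cnt_inter_bound {α β : ℕ → Bool} {k : ℕ} (h : α k ≠ β k) :
    cnt (Bset α ∩ Bset β) (ee (2 * k + 1)) ≤ ee (2 * k) := by
  have hsub : (Bset α ∩ Bset β) ∩ Set.Iio (ee (2 * k + 1)) ⊆ Set.Iio (ee (2 * k)) := by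
    rintro m ⟨⟨hma, hmb⟩, hmn⟩
    simp only [Bset, Set.mem_setOf_eq] at hma hmb
    by_contra hge
    simp only [Set.mem_Iio] at hge
    simp only [Set.mem_Iio, not_lt] at hge
    have hLL : LL m = 2 * k := LL_of_mem hge hmn
    rw [hLL] at hma hmb
    have hne := cc_ne h
    omega
  calc cnt (Bset α ∩ Bset β) (ee (2 * k + 1))
      ≤ (Set.Iio (ee (2 * k))).ncard := Set.ncard_le_ncard hsub (Set.finite_Iio _)
    _ = ee (2 * k) := ncard_Iio _

lemma dLow_eq (S : Set ℕ) :
    dLow S = liminf (fun n : ℕ => (cnt S n : ℝ) / n) atTop := by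
  unfold dLow
  simp only [natcard_eq]

lemma tendsto_half :
    Tendsto (fun n : ℕ => ((n / 2 : ℕ) : ℝ) / n) atTop (nhds (1 / 2)) := by
  have hlo : Tendsto (fun n : ℕ => (1 : ℝ) / 2 - 1 / n) atTop (nhds (1 / 2)) := by
    have h0 := tendsto_one_div_atTop_nhds_zero_nat (𝕜 := ℝ)
    have := (tendsto_const_nhds (x := (1 : ℝ) / 2) (f := atTop (α := ℕ))).sub h0
    simpa using this
  have hhi : Tendsto (fun _ : ℕ => (1 : ℝ) / 2) atTop (nhds (1 / 2)) := tendsto_const_nhds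
  apply tendsto_of_tendsto_of_tendsto_of_le_of_le' hlo hhi
  · filter_upwards [eventually_ge_atTop 1] with n hn
    have hn' : (0 : ℝ) < n := by exact_mod_cast hn
    rw [le_div_iff₀ hn']
    have hc : (n : ℝ) ≤ 2 * ((n / 2 : ℕ) : ℝ) + 1 := by
      exact_mod_cast (by omega : n ≤ 2 * (n / 2) + 1)
    have he : ((1 : ℝ) / 2 - 1 / n) * n = n / 2 - 1 := by
      field_simp
    rw [he]; linarith
  · filter_upwards [eventually_ge_atTop 1] with n hn
    have hn' : (0 : ℝ) < n := by exact_mod_cast hn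
    rw [div_le_iff₀ hn']
    have hc : 2 * ((n / 2 : ℕ) : ℝ) ≤ (n : ℝ) := by
      exact_mod_cast (by omega : 2 * (n / 2) ≤ n)
    linarith

lemma tendsto_cnt_B (α : ℕ → Bool) :
    Tendsto (fun n : ℕ => (cnt (Bset α) n : ℝ) / n) atTop (nhds (1 / 2)) := by
  have hhi : Tendsto (fun n : ℕ => ((n / 2 : ℕ) : ℝ) / n + 1 / n) atTop (nhds (1 / 2)) := by
    have := tendsto_half.add tendsto_one_div_atTop_nhds_zero_nat
    simpa using this
  apply tendsto_of_tendsto_of_tendsto_of_le_of_le' tendsto_half hhi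
  · filter_upwards [eventually_ge_atTop 1] with n hn
    have hn' : (0 : ℝ) < n := by exact_mod_cast hn
    exact (div_le_div_iff_of_pos_right hn').mpr (by exact_mod_cast cnt_B_lower α n)
  · filter_upwards [eventually_ge_atTop 1] with n hn
    have hn' : (0 : ℝ) < n := by exact_mod_cast hn
    rw [← add_div]
    refine (div_le_div_iff_of_pos_right hn').mpr ?_
    have := cnt_B_upper α n
    exact_mod_cast (by exact_mod_cast this : (cnt (Bset α) n : ℝ) ≤ ((n / 2 : ℕ) : ℝ) + 1)

lemma F_le_one (S : Set ℕ) (n : ℕ) : (cnt S n : ℝ) / n ≤ 1 := by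
  rcases Nat.eq_zero_or_pos n with h | h
  · subst h; simp
  · have hn' : (0 : ℝ) < n := by exact_mod_cast h
    rw [div_le_one hn']
    exact_mod_cast cnt_le S n

lemma bddF (S : Set ℕ) :
    IsBoundedUnder (· ≥ ·) atTop (fun n : ℕ => (cnt S n : ℝ) / n) :=
  isBoundedUnder_of ⟨0, fun n => by positivity⟩

lemma cobddF (S : Set ℕ) :
    IsCoboundedUnder (· ≥ ·) atTop (fun n : ℕ => (cnt S n : ℝ) / n) :=
  (isBoundedUnder_of ⟨1, fun n => F_le_one S n⟩).isCoboundedUnder_ge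

lemma dLow_B (α : ℕ → Bool) : dLow (Bset α) = 1 / 2 := by
  rw [dLow_eq]
  exact (tendsto_cnt_B α).liminf_eq
lemma dLow_A : dLow Aset = 1 / 2 := by
  rw [dLow_eq]
  apply le_antisymm
  · -- liminf ≤ 1/2
    apply le_of_forall_pos_le_add
    intro ε hε
    apply liminf_le_of_frequently_le _ (bddF Aset)
    rw [frequently_atTop]
    intro N
    set k := max N (Nat.ceil (2 / ε)) with hk
    refine ⟨ee (2 * k + 2), ?_, ?_⟩
    · have h1 : N ≤ k := le_max_left _ _
      have h2 := lt_ee (2 * k + 2)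
      omega
    · set n := ee (2 * k + 2) with hn
      set e := ee (2 * k + 1) with he
      have hbound := cnt_A_bound k
      have hne : n = e ^ 2 := ee_succ (2 * k + 1)
      have he2 : (2 : ℕ) ≤ e := two_le_ee _
      have hn0 : (0 : ℝ) < n := by
        have h0 := two_le_ee (2 * k + 2)
        have : (0:ℕ) < n := by omega
        exact_mod_cast this
      have heps : 2 / ε ≤ (e : ℝ) := by
        have h1 : Nat.ceil (2 / ε) ≤ k := le_max_right _ _
        have h2 : k ≤ 2 * k + 1 := by omega
        have h3 := lt_ee (2 * k + 1)
        have h4 : Nat.ceil (2 / ε) ≤ e := by omega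
        calc 2 / ε ≤ (Nat.ceil (2 / ε) : ℝ) := Nat.le_ceil _
          _ ≤ (e : ℝ) := by exact_mod_cast h4
      have hcast : (cnt Aset n : ℝ) ≤ (n : ℝ) / 2 + 1 + e := by
        have h1 : (cnt Aset n : ℝ) ≤ ((n / 2 : ℕ) : ℝ) + 1 + e := by exact_mod_cast hbound
        have h2 : ((n / 2 : ℕ) : ℝ) ≤ (n : ℝ) / 2 := by
          have h3 : 2 * ((n / 2 : ℕ) : ℝ) ≤ (n : ℝ) := by
            exact_mod_cast (by omega : 2 * (n / 2) ≤ n)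
          linarith
        linarith
      rw [div_le_iff₀ hn0]
      have hεe : 2 ≤ ε * e := by
        rw [div_le_iff₀ hε] at heps; linarith
      have hee : (n : ℝ) = (e : ℝ) ^ 2 := by exact_mod_cast hne
      have he2' : (2 : ℝ) ≤ e := by exact_mod_cast he2
      nlinarith
  · -- 1/2 ≤ liminf
    have h12 : (1 : ℝ) / 2 = liminf (fun n : ℕ => ((n / 2 : ℕ) : ℝ) / n) atTop :=
      tendsto_half.liminf_eq.symm
    rw [h12]
    apply liminf_le_liminf _ (isBoundedUnder_of ⟨0, fun n => by positivity⟩) (cobddF Aset)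
    apply Eventually.of_forall
    intro n
    rcases Nat.eq_zero_or_pos n with h | h
    · subst h; simp
    · have hn' : (0 : ℝ) < n := by exact_mod_cast h
      refine (div_le_div_iff_of_pos_right hn').mpr ?_
      have h1 : n / 2 ≤ cnt Aset n :=
        le_trans (cnt_B_lower (fun _ => false) n) (cnt_le_cnt (B_subset_A _) n)
      exact_mod_cast h1

lemma dLow_inter {α β : ℕ → Bool} (hd : ∀ K, ∃ k, K ≤ k ∧ α k ≠ β k) :
    dLow (Bset α ∩ Bset β) = 0 := by
  rw [dLow_eq]
  apply le_antisymm
  · apply le_of_forall_pos_le_add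
    intro ε hε
    rw [zero_add]
    apply liminf_le_of_frequently_le _ (bddF _)
    rw [frequently_atTop]
    intro N
    obtain ⟨k, hk1, hk2⟩ := hd (max N (Nat.ceil (1 / ε)))
    refine ⟨ee (2 * k + 1), ?_, ?_⟩
    · have h1 : N ≤ k := le_trans (le_max_left _ _) hk1
      have h2 := lt_ee (2 * k + 1)
      omega
    · set n := ee (2 * k + 1) with hn
      set e := ee (2 * k) with he
      have hbound := cnt_inter_bound hk2
      have hne : n = e ^ 2 := ee_succ (2 * k)
      have he2 : (2 : ℕ) ≤ e := two_le_ee _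
      have hn0 : (0 : ℝ) < n := by
        have h0 := two_le_ee (2 * k + 1)
        have : (0:ℕ) < n := by omega
        exact_mod_cast this
      have heps : 1 / ε ≤ (e : ℝ) := by
        have h1 : Nat.ceil (1 / ε) ≤ k := le_trans (le_max_right _ _) hk1
        have h3 := lt_ee (2 * k)
        have h4 : Nat.ceil (1 / ε) ≤ e := by omega
        calc 1 / ε ≤ (Nat.ceil (1 / ε) : ℝ) := Nat.le_ceil _
          _ ≤ (e : ℝ) := by exact_mod_cast h4
      rw [div_le_iff₀ hn0]
      have hcast : (cnt (Bset α ∩ Bset β) n : ℝ) ≤ e := by exact_mod_cast hbound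
      have hεe : 1 ≤ ε * e := by
        rw [div_le_iff₀ hε] at heps; linarith
      have hee : (n : ℝ) = (e : ℝ) ^ 2 := by exact_mod_cast hne
      have he2' : (2 : ℝ) ≤ e := by exact_mod_cast he2
      nlinarith
  · exact le_liminf_of_le (cobddF _) (Eventually.of_forall fun n => by positivity)
/-- spread a sequence of bits so that distinct sequences differ infinitely often -/
def code (γ : ℕ → Bool) : ℕ → Bool := fun k => γ (Nat.unpair k).1

lemma code_apply (γ : ℕ → Bool) (m j : ℕ) : code γ (Nat.pair m j) = γ m := by
  simp [code, Nat.unpair_pair]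

lemma code_diff {γ γ' : ℕ → Bool} (h : γ ≠ γ') :
    ∀ K, ∃ k, K ≤ k ∧ code γ k ≠ code γ' k := by
  obtain ⟨m, hm⟩ : ∃ m, γ m ≠ γ' m := by
    by_contra hc
    push_neg at hc
    exact h (funext hc)
  intro K
  refine ⟨Nat.pair m K, Nat.right_le_pair m K, ?_⟩
  rw [code_apply, code_apply]
  exact hm

/-- the family -/
noncomputable def fam (γ : ℕ → Bool) : Set ℕ := Bset (code γ)

lemma witness_mem {α : ℕ → Bool} (k : ℕ) : (ee (2 * k) + cc α (2 * k)) ∈ Bset α := by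
  have hcc := cc_le_one α (2 * k)
  have he2 := two_le_ee (2 * k)
  have hlt : ee (2 * k) + cc α (2 * k) < ee (2 * k + 1) := by
    have h2 : ee (2 * k + 1) = ee (2 * k) ^ 2 := ee_succ _
    nlinarith
  have hLL : LL (ee (2 * k) + cc α (2 * k)) = 2 * k :=
    LL_of_mem (by omega) hlt
  have hev := ee_even (2 * k)
  simp only [Bset, Set.mem_setOf_eq, hLL]
  omega

lemma Bset_inj {α β : ℕ → Bool} {k : ℕ} (h : α k ≠ β k) : Bset α ≠ Bset β := by
  intro heq
  have h1 := witness_mem (α := α) k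
  rw [heq] at h1
  simp only [Bset, Set.mem_setOf_eq] at h1
  have h2 := cc_ne h
  have hcc := cc_le_one α (2 * k)
  have hccb := cc_le_one β (2 * k)
  have he2 := two_le_ee (2 * k)
  have hlt : ee (2 * k) + cc α (2 * k) < ee (2 * k + 1) := by
    have hq : ee (2 * k + 1) = ee (2 * k) ^ 2 := ee_succ _
    nlinarith
  have hLL : LL (ee (2 * k) + cc α (2 * k)) = 2 * k := LL_of_mem (by omega) hlt
  rw [hLL] at h1
  have hev := ee_even (2 * k)
  omega

lemma fam_inj : Function.Injective fam := by
  intro γ γ' h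
  by_contra hne
  obtain ⟨k, _, hk⟩ := code_diff hne 0
  exact Bset_inj hk h

theorem stmt8 :
    ∃ (A : Set ℕ) (ℬ : Set (Set ℕ)),
      dLow A = 1 / 2 ∧
      Cardinal.mk ℬ = Cardinal.continuum ∧
      (∀ B ∈ ℬ, B ⊆ A ∧ dLow B = 1 / 2) ∧
      (∀ B ∈ ℬ, ∀ B' ∈ ℬ, B ≠ B' → dLow (B ∩ B') = 0) := by
  refine ⟨Aset, Set.range fam, dLow_A, ?_, ?_, ?_⟩
  · rw [Cardinal.mk_range_eq fam fam_inj]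
    have h1 : Cardinal.mk (ℕ → Bool) = 2 ^ Cardinal.aleph0 := by
      rw [Cardinal.mk_arrow]
      simp [Cardinal.mk_bool]
    rw [h1, Cardinal.two_power_aleph0]
  · rintro B ⟨γ, rfl⟩
    exact ⟨B_subset_A _, dLow_B _⟩
  · rintro B ⟨γ, rfl⟩ B' ⟨γ', rfl⟩ hne
    have hγ : γ ≠ γ' := fun h => hne (by rw [h])
    exact dLow_inter (code_diff hγ)
end

section
/- Let A ⊆ ℕ with d⁻(A) = ε. Then there exists a strictly increasing sequence N₀ < N₁ < N₂ < ⋯ of natural numbers such that for every B ⊆ A with d⁻(B) = ε, one has lim_{i→∞} |(A \ B) ∩ [N_i, N_{i+1})| / (N_{i+1} − N_i) = 0. Moreover the sequence (N_i) may be chosen to grow faster than any prescribed sequence. -/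
open Filter

lemma card_inter_Iio_le (S : Set ℕ) (n : ℕ) :
    Nat.card (S ∩ Set.Iio n : Set ℕ) ≤ n := by
  have h1 : Nat.card (S ∩ Set.Iio n : Set ℕ) ≤ Nat.card (Set.Iio n : Set ℕ) := by
    rw [Nat.card_coe_set_eq, Nat.card_coe_set_eq]
    exact Set.ncard_le_ncard Set.inter_subset_right (Set.finite_Iio n)
  simpa [Nat.card_Iio] using h1

lemma ratio_nonneg (S : Set ℕ) (n : ℕ) :
    0 ≤ (Nat.card (S ∩ Set.Iio n : Set ℕ) : ℝ) / n :=
  div_nonneg (Nat.cast_nonneg _) (Nat.cast_nonneg _)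

lemma ratio_le_one (S : Set ℕ) (n : ℕ) :
    (Nat.card (S ∩ Set.Iio n : Set ℕ) : ℝ) / n ≤ 1 := by
  rcases Nat.eq_zero_or_pos n with h | h
  · simp [h]
  · rw [div_le_one (by exact_mod_cast h)]
    exact_mod_cast card_inter_Iio_le S n

theorem stmt9 (A : Set ℕ) (ε : ℝ) (hA : dLow A = ε) (g : ℕ → ℕ) :
    ∃ N : ℕ → ℕ, StrictMono N ∧ (∀ i, g i < N i) ∧
      ∀ B ⊆ A, dLow B = ε →
        Tendsto
          (fun i : ℕ =>
            (Nat.card ((A \ B) ∩ Set.Ico (N i) (N (i + 1)) : Set ℕ) : ℝ) /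
              (N (i + 1) - N i))
          atTop (nhds 0) := by
  classical
  set f : Set ℕ → ℕ → ℝ := fun S n => (Nat.card (S ∩ Set.Iio n : Set ℕ) : ℝ) / n with hfdef
  -- frequently f A n < ε + η for η > 0
  have freq : ∀ η : ℝ, 0 < η → ∀ m : ℕ, ∃ n, m ≤ n ∧ f A n < ε + η := by
    intro η hη m
    have hco : IsCoboundedUnder (· ≥ ·) atTop (f A) :=
      isCoboundedUnder_ge_of_le atTop (x := 1) (fun n => ratio_le_one A n)
    have hlt : liminf (f A) atTop < ε + η := by
      rw [show liminf (f A) atTop = ε from hA]; linarith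
    have := frequently_lt_of_liminf_lt hco hlt
    rw [frequently_atTop] at this
    exact this m
  -- choose N recursively
  have key : ∀ i m : ℕ, ∃ n, m ≤ n ∧ f A n < ε + 1 / (i + 2) := fun i m =>
    freq (1 / (i + 2)) (by positivity) m
  choose next hnext1 hnext2 using key
  obtain ⟨N, hN0, hNsucc⟩ : ∃ N : ℕ → ℕ, N 0 = next 0 (g 0 + 1) ∧
      ∀ i, N (i + 1) = next (i + 1) (max (2 * N i + 1) (g (i + 1) + 1)) :=
    ⟨fun i => Nat.rec (next 0 (g 0 + 1))
      (fun i Ni => next (i + 1) (max (2 * Ni + 1) (g (i + 1) + 1))) i, rfl, fun _ => rfl⟩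
  have hgrow : ∀ i, 2 * N i + 1 ≤ N (i + 1) := fun i => by
    rw [hNsucc]; exact le_trans (le_max_left _ _) (hnext1 _ _)
  have hg : ∀ i, g i < N i := by
    intro i
    cases i with
    | zero => rw [hN0]; exact lt_of_lt_of_le (Nat.lt_succ_self _) (hnext1 _ _)
    | succ j =>
        rw [hNsucc]
        exact lt_of_lt_of_le (Nat.lt_succ_self _) (le_trans (le_max_right _ _) (hnext1 _ _))
  have hmono : StrictMono N := strictMono_nat_of_lt_succ fun i =>
    lt_of_le_of_lt (by linarith [Nat.zero_le (N i)]) (Nat.lt_of_succ_le (hgrow i))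
  have hfA : ∀ i, f A (N (i + 1)) < ε + 1 / (i + 3) := fun i => by
    have := hnext2 (i + 1) (max (2 * N i + 1) (g (i + 1) + 1))
    rw [← hNsucc] at this
    convert this using 3 <;> push_cast <;> ring
  refine ⟨N, hmono, hg, ?_⟩
  intro B hBA hB
  rw [tendsto_order]
  constructor
  · intro a ha
    filter_upwards [] with i
    have h1 : (0 : ℝ) < (N (i + 1) : ℝ) - N i := by
      have := hmono (Nat.lt_succ_self i)
      have : (N i : ℝ) < N (i + 1) := by exact_mod_cast this
      linarith
    exact lt_of_lt_of_le ha (div_nonneg (Nat.cast_nonneg _) h1.le)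
  · intro a ha
    -- eventually: f B n > ε - a/8 for n large, 1/(i+3) < a/8
    have hev : ∀ᶠ n in atTop, ε - a / 8 < f B n := by
      apply eventually_lt_of_lt_liminf
      · rw [show liminf (f B) atTop = ε from hB]; linarith
      · exact isBoundedUnder_of ⟨0, fun n => ratio_nonneg B n⟩
    obtain ⟨M, hM⟩ := eventually_atTop.1 hev
    have hNtop : Tendsto N atTop atTop := hmono.tendsto_atTop
    have hi1 : ∀ᶠ i in atTop, M ≤ N (i + 1) :=
      (hNtop.comp (tendsto_add_atTop_nat 1)).eventually_ge_atTop M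
    have hi2 : ∀ᶠ i : ℕ in atTop, 1 / ((i : ℝ) + 3) < a / 8 := by
      have : Tendsto (fun i : ℕ => 1 / ((i : ℝ) + 3)) atTop (nhds 0) := by
        apply Tendsto.div_atTop tendsto_const_nhds
        exact tendsto_atTop_add_const_right _ 3 tendsto_natCast_atTop_atTop
      exact this.eventually_lt_const (by linarith)
    filter_upwards [hi1, hi2] with i h1 h2
    set n := N (i + 1)
    have hlt : (N i : ℝ) < n := by exact_mod_cast hmono (Nat.lt_succ_self i)
    have hn2 : (n : ℝ) ≤ 2 * ((n : ℝ) - N i) := by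
      have := hgrow i
      have : (2 * N i + 1 : ℝ) ≤ n := by exact_mod_cast this
      linarith
    have hnpos : (0 : ℝ) < n := by
      have : 0 ≤ (N i : ℝ) := Nat.cast_nonneg _
      linarith
    -- counting bound
    have hsub : ((A \ B) ∩ Set.Ico (N i) n : Set ℕ) ⊆ ((A ∩ Set.Iio n) \ (B ∩ Set.Iio n) : Set ℕ) := by
      rintro x ⟨⟨hxA, hxB⟩, _, hxn⟩
      exact ⟨⟨hxA, hxn⟩, fun h => hxB h.1⟩
    have hBsubA : (B ∩ Set.Iio n : Set ℕ) ⊆ (A ∩ Set.Iio n : Set ℕ) :=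
      Set.inter_subset_inter_left _ hBA
    have hfin : (A ∩ Set.Iio n : Set ℕ).Finite := (Set.finite_Iio n).subset Set.inter_subset_right
    have hcard : (Nat.card ((A \ B) ∩ Set.Ico (N i) n : Set ℕ) : ℝ) ≤
        (Nat.card (A ∩ Set.Iio n : Set ℕ) : ℝ) - Nat.card (B ∩ Set.Iio n : Set ℕ) := by
      have h1 : Nat.card ((A \ B) ∩ Set.Ico (N i) n : Set ℕ) ≤
          Nat.card (((A ∩ Set.Iio n) \ (B ∩ Set.Iio n)) : Set ℕ) := by
        rw [Nat.card_coe_set_eq, Nat.card_coe_set_eq]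
        exact Set.ncard_le_ncard hsub hfin.diff
      have h2 : Nat.card (((A ∩ Set.Iio n) \ (B ∩ Set.Iio n)) : Set ℕ) =
          Nat.card (A ∩ Set.Iio n : Set ℕ) - Nat.card (B ∩ Set.Iio n : Set ℕ) := by
        rw [Nat.card_coe_set_eq, Nat.card_coe_set_eq, Nat.card_coe_set_eq]
        exact Set.ncard_diff hBsubA (hfin.subset hBsubA)
      have h3 : Nat.card (B ∩ Set.Iio n : Set ℕ) ≤ Nat.card (A ∩ Set.Iio n : Set ℕ) := by
        rw [Nat.card_coe_set_eq, Nat.card_coe_set_eq]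
        exact Set.ncard_le_ncard hBsubA hfin
      calc (Nat.card ((A \ B) ∩ Set.Ico (N i) n : Set ℕ) : ℝ)
          ≤ (Nat.card (((A ∩ Set.Iio n) \ (B ∩ Set.Iio n)) : Set ℕ) : ℝ) := by exact_mod_cast h1
        _ = (Nat.card (A ∩ Set.Iio n : Set ℕ) : ℝ) - Nat.card (B ∩ Set.Iio n : Set ℕ) := by
            rw [h2, Nat.cast_sub h3]
    -- main estimate
    have hfAn : f A n < ε + a / 8 + 1 / ((i : ℝ) + 3) - 1 / ((i : ℝ) + 3) + 1 / ((i : ℝ) + 3) := by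
      have := hfA i; simp only [hfdef] at this ⊢; linarith
    have hfBn : ε - a / 8 < f B n := hM n h1
    have hAu : (Nat.card (A ∩ Set.Iio n : Set ℕ) : ℝ) < (ε + 1 / ((i : ℝ) + 3)) * n := by
      have := hfA i
      have := (div_lt_iff₀ hnpos).1 this
      exact this
    have hBl : (ε - a / 8) * n < (Nat.card (B ∩ Set.Iio n : Set ℕ) : ℝ) := by
      have := (lt_div_iff₀ hnpos).1 hfBn
      exact this
    have hnum : (Nat.card ((A \ B) ∩ Set.Ico (N i) n : Set ℕ) : ℝ) <
        (1 / ((i : ℝ) + 3) + a / 8) * n := by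
      calc (Nat.card ((A \ B) ∩ Set.Ico (N i) n : Set ℕ) : ℝ)
          ≤ (Nat.card (A ∩ Set.Iio n : Set ℕ) : ℝ) - Nat.card (B ∩ Set.Iio n : Set ℕ) := hcard
        _ < (ε + 1 / ((i : ℝ) + 3)) * n - (ε - a / 8) * n := by linarith
        _ = (1 / ((i : ℝ) + 3) + a / 8) * n := by ring
    have hdenpos : (0 : ℝ) < (n : ℝ) - N i := by linarith
    rw [div_lt_iff₀ hdenpos]
    calc (Nat.card ((A \ B) ∩ Set.Ico (N i) n : Set ℕ) : ℝ)
        < (1 / ((i : ℝ) + 3) + a / 8) * n := hnum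
      _ ≤ (1 / ((i : ℝ) + 3) + a / 8) * (2 * ((n : ℝ) - N i)) := by
          apply mul_le_mul_of_nonneg_left hn2
          positivity
      _ < a * ((n : ℝ) - N i) := by nlinarith
end

section
/- Let A ⊆ ℕ with d⁻(A) = ε > 0 and let (N_i) be a sequence satisfying |A ∩ [0,N_i)|/N_i ≤ ε + 1/i and N_{i+1} > 2 N_i for all i ≥ 1. If B ⊆ A and there exist δ > 0 and infinitely many i with |(A \ B) ∩ [N_i, N_{i+1})| / (N_{i+1} − N_i) ≥ δ, then d⁻(B) ≤ ε − δ/2; in particular d⁻(B) < ε. -/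
/-!
The initial segments `[0, N (i+1))` have `A`-density at most about `ε`, while for the good
indices `i` the last block `[N i, N (i+1))` makes up more than half of the segment and at least a
`δ`-proportion of it lies in `A \ B`. Removing these elements, `B` has density at most about
`ε - δ/2` along the subsequence `N (i+1)`, which bounds the liminf.
-/

open Filter

lemma self_le_apply_succ_of_lt_apply_succ {N : ℕ → ℕ} (hN : ∀ i, 1 ≤ i → N i < N (i + 1)) :
    ∀ i, 1 ≤ i → i ≤ N (i + 1) := by
  refine Nat.le_induction (by have := hN 1 le_rfl; omega) fun i hi ih => ?_
  have := hN (i + 1) (by omega)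
  omega

lemma card_inter_Iio_add_card_diff_inter_Ico_le {A B : Set ℕ} (hB : B ⊆ A) (m n : ℕ) :
    Nat.card (B ∩ Set.Iio n : Set ℕ) + Nat.card ((A \ B) ∩ Set.Ico m n : Set ℕ) ≤
      Nat.card (A ∩ Set.Iio n : Set ℕ) := by
  have hdisj : Disjoint (B ∩ Set.Iio n) ((A \ B) ∩ Set.Ico m n) :=
    Set.disjoint_left.2 fun x hxB hxAB => hxAB.1.2 hxB.1
  have hsub : (B ∩ Set.Iio n) ∪ ((A \ B) ∩ Set.Ico m n) ⊆ A ∩ Set.Iio n := by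
    rintro x (⟨hxB, hx⟩ | ⟨hxAB, hx⟩)
    · exact ⟨hB hxB, hx⟩
    · exact ⟨hxAB.1, hx.2⟩
  simp only [Nat.card_coe_set_eq]
  rw [← Set.ncard_union_eq hdisj ((Set.finite_Iio n).inter_of_right _)
    ((Set.finite_Ico m n).inter_of_right _)]
  exact Set.ncard_le_ncard hsub ((Set.finite_Iio n).inter_of_right _)

lemma card_inter_Iio_div_le_of_large_final_block {A B : Set ℕ} (hB : B ⊆ A) {m n : ℕ}
    (hmn : 2 * m < n) {a δ : ℝ} (hδ : 0 ≤ δ)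
    (hA : (Nat.card (A ∩ Set.Iio n : Set ℕ) : ℝ) / n ≤ a)
    (hblock : δ * (n - m : ℝ) ≤ Nat.card ((A \ B) ∩ Set.Ico m n : Set ℕ)) :
    (Nat.card (B ∩ Set.Iio n : Set ℕ) : ℝ) / n ≤ a - δ / 2 := by
  have hn : (0 : ℝ) < n := by exact_mod_cast (by omega : 0 < n)
  have hm : (2 * m : ℝ) < n := by exact_mod_cast hmn
  have hcard : (Nat.card (B ∩ Set.Iio n : Set ℕ) : ℝ) +
      Nat.card ((A \ B) ∩ Set.Ico m n : Set ℕ) ≤ Nat.card (A ∩ Set.Iio n : Set ℕ) := by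
    exact_mod_cast card_inter_Iio_add_card_diff_inter_Ico_le hB m n
  have hhalf : δ * n / 2 ≤ δ * (n - m : ℝ) := by nlinarith
  rw [div_le_iff₀ hn] at hA ⊢
  nlinarith

lemma dLow_le_of_frequently_le {B : Set ℕ} {c : ℝ}
    (h : ∃ᶠ n in atTop, (Nat.card (B ∩ Set.Iio n : Set ℕ) : ℝ) / n ≤ c) : dLow B ≤ c :=
  liminf_le_of_frequently_le h ⟨0, eventually_map.2 (Eventually.of_forall fun n => by positivity)⟩

theorem stmt10_general (A : Set ℕ) (ε : ℝ)
    (N : ℕ → ℕ)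
    (hN : ∀ i : ℕ, 1 ≤ i →
      (Nat.card (A ∩ Set.Iio (N i) : Set ℕ) : ℝ) / N i ≤ ε + 1 / i ∧
      2 * N i < N (i + 1))
    (B : Set ℕ) (hB : B ⊆ A) (δ : ℝ) (hδ : 0 < δ)
    (hinf : ∃ᶠ i in atTop,
      δ * (N (i + 1) - N i : ℝ) ≤
        (Nat.card ((A \ B) ∩ Set.Ico (N i) (N (i + 1)) : Set ℕ) : ℝ)) :
    dLow B ≤ ε - δ / 2 ∧ dLow B < ε := by
  have hgrow := self_le_apply_succ_of_lt_apply_succ (N := N) fun i hi => by have := (hN i hi).2; omega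
  have hN_tendsto : Tendsto (fun i => N (i + 1)) atTop atTop :=
    tendsto_atTop_mono' _ (eventually_ge_atTop 1 |>.mono hgrow) tendsto_id
  have hmain : dLow B ≤ ε - δ / 2 := by
    refine le_of_forall_pos_le_add fun η hη => dLow_le_of_frequently_le ?_
    have hsmall : ∀ᶠ i : ℕ in atTop, 1 / ((i : ℝ) + 1) < η :=
      tendsto_one_div_add_atTop_nhds_zero_nat.eventually_lt_const hη
    refine hN_tendsto.frequently <| ((hinf.and_eventually hsmall).and_eventually
      (eventually_ge_atTop 1)).mono fun i ⟨⟨hblock, hi⟩, hi1⟩ => ?_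
    have hA := (hN (i + 1) (by omega)).1
    push_cast at hA
    linarith [card_inter_Iio_div_le_of_large_final_block hB (hN i hi1).2 hδ.le hA hblock]
  exact ⟨hmain, hmain.trans_lt (by linarith)⟩

theorem stmt10 (A : Set ℕ) (ε : ℝ) (hε : 0 < ε) (hA : dLow A = ε)
    (N : ℕ → ℕ)
    (hN : ∀ i : ℕ, 1 ≤ i →
      (Nat.card (A ∩ Set.Iio (N i) : Set ℕ) : ℝ) / N i ≤ ε + 1 / i ∧
      2 * N i < N (i + 1))
    (B : Set ℕ) (hB : B ⊆ A) (δ : ℝ) (hδ : 0 < δ)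
    (hinf : ∃ᶠ i in atTop,
      δ * (N (i + 1) - N i : ℝ) ≤
        (Nat.card ((A \ B) ∩ Set.Ico (N i) (N (i + 1)) : Set ℕ) : ℝ)) :
    dLow B ≤ ε - δ / 2 ∧ dLow B < ε :=
  stmt10_general A ε N hN B hB δ hδ hinf
end

section
/- For every lower semi-continuous submeasure φ on ℕ, the collection Exh(φ) = { X ⊆ ℕ : lim_{m→∞} φ(X \ [0,m)) = 0 } is an ideal on ℕ closed under subsets and finite unions and containing all finite sets; moreover it is a P-ideal: for any countable family X₀, X₁, … ∈ Exh(φ) there is Y ∈ Exh(φ) with Xₙ \ Y finite for every n. -/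
open Filter

/-- A submeasure on ℕ, with values in `[0,∞]`. -/
structure Submeasure where
  toFun : Set ℕ → ENNReal
  empty : toFun ∅ = 0
  mono : ∀ ⦃X Y : Set ℕ⦄, X ⊆ Y → toFun X ≤ toFun Y
  subadd : ∀ X Y : Set ℕ, toFun (X ∪ Y) ≤ toFun X + toFun Y
  fin_singleton : ∀ n : ℕ, toFun {n} < ⊤

/-- Lower semi-continuity of a submeasure. -/
def Submeasure.LSC (φ : Submeasure) : Prop :=
  ∀ X : Set ℕ, Tendsto (fun n : ℕ => φ.toFun (X ∩ Set.Iio n)) atTop (nhds (φ.toFun X))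

/-- The exhaustive ideal of a submeasure. -/
def Exh (φ : Submeasure) : Set (Set ℕ) :=
  {X | Tendsto (fun m : ℕ => φ.toFun (X \ Set.Iio m)) atTop (nhds 0)}

lemma Submeasure.biUnion_le (φ : Submeasure) (s : Finset ℕ) (f : ℕ → Set ℕ) :
    φ.toFun (⋃ n ∈ s, f n) ≤ ∑ n ∈ s, φ.toFun (f n) := by
  classical
  induction s using Finset.induction with
  | empty => simp [φ.empty]
  | insert a s h ih =>
    rw [Finset.set_biUnion_insert, Finset.sum_insert h]
    exact (φ.subadd _ _).trans (add_le_add le_rfl ih)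

lemma exh_finite (φ : Submeasure) {X : Set ℕ} (hX : X.Finite) : X ∈ Exh φ := by
  obtain ⟨M, hM⟩ := hX.bddAbove
  have h : ∀ᶠ m in atTop, φ.toFun (X \ Set.Iio m) = 0 := by
    filter_upwards [eventually_ge_atTop (M + 1)] with m hm
    have : X \ Set.Iio m = ∅ := by
      ext x
      simp only [Set.mem_diff, Set.mem_Iio, Set.mem_empty_iff_false, iff_false, not_and, not_not]
      intro hx
      exact lt_of_le_of_lt (hM hx) (lt_of_lt_of_le (Nat.lt_succ_self M) hm)
    rw [this, φ.empty]
  exact Tendsto.congr' (h.mono fun m hm => hm.symm) tendsto_const_nhds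

lemma exh_mono (φ : Submeasure) {X Y : Set ℕ} (hXY : X ⊆ Y) (hY : Y ∈ Exh φ) : X ∈ Exh φ :=
  tendsto_of_tendsto_of_tendsto_of_le_of_le tendsto_const_nhds hY (fun _ => zero_le)
    (fun _ => φ.mono (Set.diff_subset_diff_left hXY))

lemma exh_union (φ : Submeasure) {X Y : Set ℕ} (hX : X ∈ Exh φ) (hY : Y ∈ Exh φ) :
    X ∪ Y ∈ Exh φ := by
  have h := hX.add hY
  rw [add_zero] at h
  refine tendsto_of_tendsto_of_tendsto_of_le_of_le tendsto_const_nhds h (fun _ => zero_le) ?_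
  intro m
  simp only []
  rw [Set.union_diff_distrib]
  exact φ.subadd _ _

theorem stmt19 (φ : Submeasure) (hφ : φ.LSC) :
    (∀ X : Set ℕ, X.Finite → X ∈ Exh φ) ∧
    (∀ X Y : Set ℕ, X ⊆ Y → Y ∈ Exh φ → X ∈ Exh φ) ∧
    (∀ X Y : Set ℕ, X ∈ Exh φ → Y ∈ Exh φ → X ∪ Y ∈ Exh φ) ∧
    (∀ X : ℕ → Set ℕ, (∀ n, X n ∈ Exh φ) →
      ∃ Y ∈ Exh φ, ∀ n, (X n \ Y).Finite) := by
  refine ⟨fun X hX => exh_finite φ hX, fun X Y h hY => exh_mono φ h hY,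
    fun X Y hX hY => exh_union φ hX hY, ?_⟩
  intro X hX
  -- choose cut-offs m n ≥ n with small tail measure
  have hchoice : ∀ n : ℕ, ∃ m : ℕ, n ≤ m ∧ φ.toFun (X n \ Set.Iio m) ≤ (2⁻¹ : ENNReal) ^ n := by
    intro n
    have hpos : (0 : ENNReal) < (2⁻¹ : ENNReal) ^ n := by
      apply ENNReal.pow_pos
      simp
    have := (ENNReal.tendsto_nhds_zero.mp (hX n)) _ hpos
    obtain ⟨m, hm1, hm2⟩ := ((eventually_ge_atTop n).and this).exists
    exact ⟨m, hm1, hm2⟩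
  choose m hm1 hm2 using hchoice
  set Z : ℕ → Set ℕ := fun n => X n \ Set.Iio (m n) with hZ
  set Y : Set ℕ := ⋃ n, Z n with hY
  -- tail unions have small measure
  have key : ∀ N : ℕ, φ.toFun (⋃ n, ⋃ (_ : N ≤ n), Z n) ≤ 2 * (2⁻¹ : ENNReal) ^ N := by
    intro N
    set T : Set ℕ := ⋃ n, ⋃ (_ : N ≤ n), Z n with hT
    refine le_of_tendsto (hφ T) (Eventually.of_forall fun k => ?_)
    have hsub : T ∩ Set.Iio k ⊆ ⋃ n ∈ Finset.Ico N k, Z n := by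
      rintro x ⟨hxT, hxk⟩
      simp only [hT, Set.mem_iUnion] at hxT
      obtain ⟨n, hNn, hxZ⟩ := hxT
      have hnk : n < k := by
        by_contra hnk
        push_neg at hnk
        have : m n ≤ x := by simpa [hZ, Set.mem_Iio] using hxZ.2
        exact absurd (Set.mem_Iio.mp hxk) (not_lt.mpr (le_trans (le_trans hnk (hm1 n)) this))
      exact Set.mem_biUnion (Finset.mem_Ico.mpr ⟨hNn, hnk⟩) hxZ
    calc φ.toFun (T ∩ Set.Iio k) ≤ ∑ n ∈ Finset.Ico N k, φ.toFun (Z n) :=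
          (φ.mono hsub).trans (φ.biUnion_le _ _)
      _ ≤ ∑ n ∈ Finset.Ico N k, (2⁻¹ : ENNReal) ^ n := Finset.sum_le_sum fun n _ => hm2 n
      _ = ∑ j ∈ Finset.range (k - N), (2⁻¹ : ENNReal) ^ (N + j) := by
          rw [Finset.sum_Ico_eq_sum_range]
      _ ≤ ∑' j : ℕ, (2⁻¹ : ENNReal) ^ (N + j) := ENNReal.sum_le_tsum _
      _ = (2⁻¹ : ENNReal) ^ N * ∑' j : ℕ, (2⁻¹ : ENNReal) ^ j := by
          simp_rw [pow_add]; rw [ENNReal.tsum_mul_left]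
      _ ≤ 2 * (2⁻¹ : ENNReal) ^ N := by
          rw [ENNReal.tsum_geometric, ENNReal.one_sub_inv_two, inv_inv, mul_comm]
  refine ⟨Y, ?_, ?_⟩
  · -- Y ∈ Exh φ
    rw [Exh, Set.mem_setOf_eq, ENNReal.tendsto_nhds_zero]
    intro ε hε
    have h2 : Tendsto (fun N : ℕ => 2 * (2⁻¹ : ENNReal) ^ N) atTop (nhds 0) := by
      have := ENNReal.tendsto_pow_atTop_nhds_zero_of_lt_one
        (by norm_num : (2⁻¹ : ENNReal) < 1)
      have := ENNReal.Tendsto.const_mul this (Or.inr (by norm_num : (2 : ENNReal) ≠ ⊤))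
      simpa using this
    have hhalf : (0 : ENNReal) < ε / 2 := ENNReal.half_pos hε.ne'
    obtain ⟨N, hN⟩ := (ENNReal.tendsto_nhds_zero.mp h2 _ hhalf).exists
    -- W = union of first N sets, in Exh
    have hW : (⋃ n ∈ Finset.range N, X n) ∈ Exh φ := by
      classical
      induction (Finset.range N) using Finset.induction with
      | empty => simpa using exh_finite φ Set.finite_empty
      | insert a s h ih =>
        rw [Finset.set_biUnion_insert]
        exact exh_union φ (hX a) ih
    filter_upwards [ENNReal.tendsto_nhds_zero.mp hW _ hhalf] with mm hmm
    have hsub : Y \ Set.Iio mm ⊆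
        ((⋃ n ∈ Finset.range N, X n) \ Set.Iio mm) ∪ ⋃ n, ⋃ (_ : N ≤ n), Z n := by
      rintro x ⟨hxY, hxm⟩
      simp only [hY, Set.mem_iUnion] at hxY
      obtain ⟨n, hxZ⟩ := hxY
      rcases lt_or_ge n N with hnN | hnN
      · exact Or.inl ⟨Set.mem_biUnion (Finset.mem_range.mpr hnN) hxZ.1, hxm⟩
      · exact Or.inr (Set.mem_iUnion.mpr ⟨n, Set.mem_iUnion.mpr ⟨hnN, hxZ⟩⟩)
    calc φ.toFun (Y \ Set.Iio mm)
        ≤ φ.toFun ((⋃ n ∈ Finset.range N, X n) \ Set.Iio mm) +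
            φ.toFun (⋃ n, ⋃ (_ : N ≤ n), Z n) := (φ.mono hsub).trans (φ.subadd _ _)
      _ ≤ ε / 2 + ε / 2 := add_le_add hmm ((key N).trans hN)
      _ = ε := ENNReal.add_halves ε
  · -- X n \ Y finite
    intro n
    have : X n \ Y ⊆ Set.Iio (m n) := by
      rintro x ⟨hx, hxY⟩
      by_contra hxm
      exact hxY (Set.mem_iUnion.mpr ⟨n, hx, hxm⟩)
    exact (Set.finite_Iio _).subset this
end
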